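/- arXiv:quant-ph/0103156 — 2 statements merged into one kernel-verified Lean document; each statement's English description precedes it below -/
import Mathlib

section
/- Let V be a K×K unitary matrix and λ ∈ [-1,1]. Define the 2K×2K block matrix G = [[I, λV],[λV*, I]]. Then for every real p ≥ 1, G is positive semidefinite and G^p = [[αI, βV],[βV*, αI]], where α = ((1+λ)^p + (1-λ)^p)/2 and β = ((1+λ)^p - (1-λ)^p)/2. -/
open Matrix
open scoped ComplexOrder

/-- For a K×K unitary `V` and `λ ∈ [-1,1]`, the block matrix `G = [[I, λV],[λV*, I]]`
is positive semidefinite and, for every real `p ≥ 1`,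
`G^p = [[αI, βV],[βV*, αI]]` with `α = ((1+λ)^p + (1-λ)^p)/2` and
`β = ((1+λ)^p - (1-λ)^p)/2`, where `G^p` is defined via the functional calculus. -/
theorem block_unitary_power (K : ℕ) (V : Matrix (Fin K) (Fin K) ℂ)
    (hV : V ∈ Matrix.unitaryGroup (Fin K) ℂ) (l : ℝ) (hl₁ : -1 ≤ l) (hl₂ : l ≤ 1) :
    (Matrix.fromBlocks (1 : Matrix (Fin K) (Fin K) ℂ) (l • V) (l • Vᴴ) 1).PosSemidef ∧
    ∀ p : ℝ, 1 ≤ p →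
      cfc (fun x : ℝ => x ^ p)
          (Matrix.fromBlocks (1 : Matrix (Fin K) (Fin K) ℂ) (l • V) (l • Vᴴ) 1)
        = Matrix.fromBlocks
            ((((1 + l) ^ p + (1 - l) ^ p) / 2) • (1 : Matrix (Fin K) (Fin K) ℂ))
            ((((1 + l) ^ p - (1 - l) ^ p) / 2) • V)
            ((((1 + l) ^ p - (1 - l) ^ p) / 2) • Vᴴ)
            ((((1 + l) ^ p + (1 - l) ^ p) / 2) • (1 : Matrix (Fin K) (Fin K) ℂ)) := by
  have hV1 : Vᴴ * V = 1 := Matrix.mem_unitaryGroup_iff'.mp hV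
  have hV2 : V * Vᴴ = 1 := Matrix.mem_unitaryGroup_iff.mp hV
  set G : Matrix (Fin K ⊕ Fin K) (Fin K ⊕ Fin K) ℂ :=
    Matrix.fromBlocks 1 (l • V) (l • Vᴴ) 1 with hGdef
  -- G is self-adjoint
  have hGsa : IsSelfAdjoint G := by
    show Gᴴ = G
    simp [hGdef, Matrix.fromBlocks_conjTranspose]
  -- quadratic identity
  have hG2 : G * G = (2:ℝ) • G - (1 - l^2) • 1 := by
    rw [eq_sub_iff_add_eq, hGdef, ← Matrix.fromBlocks_one (l := Fin K) (m := Fin K),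
      Matrix.fromBlocks_multiply, Matrix.fromBlocks_smul, Matrix.fromBlocks_smul,
      Matrix.fromBlocks_add]
    simp only [Matrix.smul_mul, Matrix.mul_smul, hV1, hV2, smul_smul, Matrix.fromBlocks_inj,
      Matrix.mul_one, Matrix.one_mul, Matrix.mul_zero, Matrix.zero_mul, add_zero, zero_add,
      Matrix.fromBlocks_inj]
    refine ⟨?_, ?_, ?_, ?_⟩ <;> module
  -- spectrum is contained in {1+l, 1-l}
  have hspec : spectrum ℝ G ⊆ {1+l, 1-l} := by
    intro x hx
    by_contra hxmem
    simp only [Set.mem_insert_iff, Set.mem_singleton_iff, not_or] at hxmem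
    rw [spectrum.mem_iff] at hx
    apply hx
    set c : ℝ := (x - (1+l)) * (x - (1-l)) with hc
    have hc0 : c ≠ 0 := mul_ne_zero (sub_ne_zero.mpr hxmem.1) (sub_ne_zero.mpr hxmem.2)
    have key : (x • 1 - G) * ((x-2) • 1 + G) = c • 1 := by
      simp only [sub_mul, mul_add, add_mul, mul_sub, Matrix.smul_mul, Matrix.mul_smul,
        one_mul, mul_one, hG2]
      module
    have key2 : ((x-2) • 1 + G) * (x • 1 - G) = c • 1 := by
      simp only [sub_mul, mul_add, add_mul, mul_sub, Matrix.smul_mul, Matrix.mul_smul,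
        one_mul, mul_one, hG2]
      module
    rw [Algebra.algebraMap_eq_smul_one]
    refine isUnit_iff_exists.mpr ⟨c⁻¹ • ((x-2) • 1 + G), ?_, ?_⟩
    · rw [Matrix.mul_smul, key, smul_smul, inv_mul_cancel₀ hc0, one_smul]
    · rw [Matrix.smul_mul, key2, smul_smul, inv_mul_cancel₀ hc0, one_smul]
  have hfin : (spectrum ℝ G).Finite :=
    (Set.finite_singleton (1-l) |>.insert (1+l)).subset hspec
  constructor
  · -- positive semidefiniteness
    have h1 : (0:ℝ) ≤ (1+l)/2 := by linarith
    have h2 : (0:ℝ) ≤ (1-l)/2 := by linarith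
    set s₁ : ℝ := Real.sqrt ((1+l)/2) with hs₁
    set s₂ : ℝ := Real.sqrt ((1-l)/2) with hs₂
    have hsq1 : s₁ * s₁ = (1+l)/2 := Real.mul_self_sqrt h1
    have hsq2 : s₂ * s₂ = (1-l)/2 := Real.mul_self_sqrt h2
    have hsum : G = (s₁ • Matrix.fromBlocks 1 V 0 0)ᴴ * (s₁ • Matrix.fromBlocks 1 V 0 0)
        + (s₂ • Matrix.fromBlocks 1 (-V) 0 0)ᴴ * (s₂ • Matrix.fromBlocks 1 (-V) 0 0) := by
      simp only [Matrix.conjTranspose_smul, star_trivial, Matrix.smul_mul, Matrix.mul_smul,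
        smul_smul, Matrix.fromBlocks_conjTranspose, Matrix.fromBlocks_multiply,
        Matrix.conjTranspose_zero, Matrix.conjTranspose_one, Matrix.conjTranspose_neg,
        Matrix.mul_one, Matrix.one_mul, Matrix.mul_zero, Matrix.zero_mul, add_zero, zero_add,
        Matrix.neg_mul, Matrix.mul_neg, neg_neg, hV1, hGdef]
      rw [Matrix.fromBlocks_smul, Matrix.fromBlocks_smul, Matrix.fromBlocks_add,
        Matrix.fromBlocks_inj]
      refine ⟨?_, ?_, ?_, ?_⟩ <;> rw [hsq1, hsq2] <;> module
    rw [hsum]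
    exact (Matrix.posSemidef_conjTranspose_mul_self _).add
      (Matrix.posSemidef_conjTranspose_mul_self _)
  · intro p hp
    set fa : ℝ := (1+l)^p with hfa
    set fb : ℝ := (1-l)^p with hfb
    set β' : ℝ := (fa - fb)/(2*l) with hβ'
    set α' : ℝ := (fa+fb)/2 - β' with hα'
    have hga : α' + β' * (1+l) = fa := by
      by_cases hl : l = 0
      · subst hl
        simp [hα', hβ', hfa, hfb]
      · rw [hα', hβ']; field_simp; ring
    have hgb : α' + β' * (1-l) = fb := by
      by_cases hl : l = 0
      · subst hl
        simp [hα', hβ', hfa, hfb]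
      · rw [hα', hβ']; field_simp; ring
    have h1 : Set.EqOn (fun x : ℝ => x ^ p) (fun x : ℝ => α' + β' * x) (spectrum ℝ G) := by
      intro x hx
      rcases hspec hx with h | h
      · subst h; simpa using hga.symm
      · rw [Set.mem_singleton_iff] at h; subst h; simpa using hgb.symm
    rw [cfc_congr h1,
      cfc_const_add α' (fun x : ℝ => β' * x) G (hfin.continuousOn _) hGsa,
      cfc_const_mul_id β' G hGsa,
      Algebra.algebraMap_eq_smul_one, hGdef,
      ← Matrix.fromBlocks_one (l := Fin K) (m := Fin K),
      Matrix.fromBlocks_smul, Matrix.fromBlocks_smul, Matrix.fromBlocks_add,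
      Matrix.fromBlocks_inj]
    have hab : α' + β' = (fa + fb)/2 := by rw [hα']; ring
    have hbl : β' * l = (fa - fb)/2 := by
      by_cases hl : l = 0
      · subst hl
        simp [hβ', hfa, hfb]
      · rw [hβ']; field_simp
    refine ⟨?_, ?_, ?_, ?_⟩
    · rw [← add_smul, hab]
    · rw [smul_zero, zero_add, smul_smul, hbl]
    · rw [smul_zero, zero_add, smul_smul, hbl]
    · rw [← add_smul, hab]
end

section
/- (Epstein concavity, special case used) For a fixed positive semidefinite K×K matrix B and real p ≥ 1, the map A ↦ Tr (B A^{1/p} B)^p is concave on the cone of positive semidefinite K×K matrices. -/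
/-!
For `p ≥ 1` and `M ≥ 0`, Young's inequality in the eigenbases of `M` and `Z` gives the
variational formula `Tr M^p = max_{Z ≥ 0} (p Tr(M Z^{1-1/p}) - (p-1) Tr Z)`, attained at
`Z = M^p`. With `M = Cᴴ A^{1/p} C` the first term is jointly concave in `(A, Z)` by Lieb's
concavity theorem, so `Tr M^p` is the maximum over `Z` of a function jointly concave in `(A, Z)`,
hence concave in `A`.

For Lieb's theorem, write `Tr(Cᴴ A^s C Z^{1-s}) = ∑ a_i^s z_j^{1-s} |c_ij|²` in the eigenbases
of `A` and `Z`, and represent `a^s z^{1-s} = z (a/z)^s` as an integral over `l > 0` of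
`l^{s-2} (a : l z)`, where `(a : b) = ab/(a+b)` is the parallel sum. For each `l`,
`∑ (a_i : l z_j) |c_ij|² = min_Y Tr((C-Y)ᴴ A (C-Y)) + l Tr(Yᴴ Y Z)` is an infimum of functions
linear in `(A, Z)`, hence jointly concave.
-/

open MeasureTheory Set Complex Matrix
open scoped ComplexOrder

namespace Real

noncomputable def parallelSum (a b : ℝ) : ℝ := a * b / (a + b)

lemma add_mul_add_mul_normSq (a b : ℝ) (w y : ℂ) :
    (a + b) * (a * normSq (w - y) + b * normSq y) =
      a * b * normSq w + normSq (a * (w - y) - b * y) := by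
  simp only [normSq_apply, sub_re, sub_im, mul_re, mul_im, ofReal_re, ofReal_im]
  ring

lemma parallelSum_mul_normSq_le {a b : ℝ} (ha : 0 ≤ a) (hb : 0 ≤ b) (w y : ℂ) :
    parallelSum a b * normSq w ≤ a * normSq (w - y) + b * normSq y := by
  obtain hab | hab := (add_nonneg ha hb).eq_or_lt
  · obtain ⟨rfl, rfl⟩ : a = 0 ∧ b = 0 := by constructor <;> linarith
    simp [parallelSum]
  rw [parallelSum, div_mul_eq_mul_div, div_le_iff₀' hab, add_mul_add_mul_normSq]
  linarith [normSq_nonneg (a * (w - y) - b * y)]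

lemma parallelSum_mul_normSq_eq {a b : ℝ} (ha : 0 ≤ a) (hb : 0 ≤ b) (w : ℂ) :
    a * normSq (w - (a / (a + b) : ℝ) * w) + b * normSq ((a / (a + b) : ℝ) * w) =
      parallelSum a b * normSq w := by
  obtain hab | hab := (add_nonneg ha hb).eq_or_lt
  · obtain ⟨rfl, rfl⟩ : a = 0 ∧ b = 0 := by constructor <;> linarith
    simp [parallelSum]
  have h := add_mul_add_mul_normSq a b w ((a / (a + b) : ℝ) * w)
  have hzero :
      (a : ℂ) * (w - (a / (a + b) : ℝ) * w) - b * ((a / (a + b) : ℝ) * w) = 0 := by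
    have : (a : ℂ) + b ≠ 0 := by exact_mod_cast hab.ne'
    push_cast
    field_simp
    ring
  rw [hzero, map_zero, add_zero] at h
  rw [parallelSum, div_mul_eq_mul_div, eq_div_iff hab.ne', ← h]
  ring

lemma rpow_sub_two_mul_parallelSum_eq {s l a z : ℝ} (hl : 0 < l) (ha : 0 ≤ a) (hz : 0 ≤ z) :
    l ^ (s - 2) * parallelSum a (l * z) = z * rpowIntegrand₀₁ s l (a / z) := by
  obtain rfl | hz := hz.eq_or_lt
  · simp [parallelSum]
  have hl2 : l ^ s = l ^ (s - 2) * l ^ 2 := by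
    rw [← rpow_natCast, ← rpow_add hl]; norm_num
  rw [rpowIntegrand₀₁, hl2, parallelSum]
  field_simp
  ring

lemma exists_measure_rpow_mul_rpow_eq_integral {s : ℝ} (hs : s ∈ Ioo 0 1) :
    ∃ μ : Measure ℝ, ∀ a z : ℝ, 0 ≤ a → 0 ≤ z →
      IntegrableOn (fun l ↦ l ^ (s - 2) * parallelSum a (l * z)) (Ioi 0) μ ∧
      a ^ s * z ^ (1 - s) = ∫ l in Ioi 0, l ^ (s - 2) * parallelSum a (l * z) ∂μ := by
  obtain ⟨μ, hμ⟩ := exists_measure_rpow_eq_integral_rpowIntegrand₀₁ hs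
  refine ⟨μ, fun a z ha hz ↦ ?_⟩
  have hEq : EqOn (fun l ↦ l ^ (s - 2) * parallelSum a (l * z))
      (fun l ↦ z * rpowIntegrand₀₁ s l (a / z)) (Ioi 0) :=
    fun l hl ↦ rpow_sub_two_mul_parallelSum_eq hl ha hz
  obtain ⟨hint, hrepr⟩ := hμ (a / z) (div_nonneg ha hz)
  refine ⟨IntegrableOn.congr_fun (hint.const_mul z) hEq.symm measurableSet_Ioi, ?_⟩
  rw [setIntegral_congr_fun measurableSet_Ioi hEq, integral_const_mul, ← hrepr]
  obtain rfl | hz := hz.eq_or_lt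
  · simp [zero_rpow (sub_pos.2 hs.2).ne']
  rw [div_rpow ha hz.le, rpow_sub hz, rpow_one]
  field_simp

lemma mul_mul_rpow_one_sub_one_div_le {p m z : ℝ} (hp : 1 ≤ p) (hm : 0 ≤ m) (hz : 0 ≤ z) :
    p * (m * z ^ (1 - 1 / p)) ≤ m ^ p + (p - 1) * z := by
  have hp0 : 0 < p := by linarith
  have h := geom_mean_le_arith_mean2_weighted (one_div_nonneg.2 hp0.le)
    (sub_nonneg.2 ((div_le_one hp0).2 hp)) (rpow_nonneg hm p) hz (add_sub_cancel _ _)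
  rw [one_div, rpow_rpow_inv hm hp0.ne', ← one_div] at h
  calc p * (m * z ^ (1 - 1 / p)) ≤ p * (1 / p * m ^ p + (1 - 1 / p) * z) := by gcongr
    _ = m ^ p + (p - 1) * z := by field_simp

end Real

namespace Matrix

variable {n : Type*} [Fintype n]

lemma re_trace_smul_add_smul (a b : ℝ) (X Y : Matrix n n ℂ) :
    (a • X + b • Y).trace.re = a * X.trace.re + b * Y.trace.re := by
  simp [trace_add, trace_smul]

variable [DecidableEq n]

lemma trace_diagonal_mul_mul_diagonal_mul_conjTranspose (d e : n → ℂ) (G : Matrix n n ℂ) :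
    (diagonal d * G * diagonal e * Gᴴ).trace = ∑ i, ∑ j, d i * e j * normSq (G i j) := by
  refine Finset.sum_congr rfl fun i _ ↦ ?_
  rw [diag_apply, mul_apply]
  refine Finset.sum_congr rfl fun j _ ↦ ?_
  rw [mul_diagonal, diagonal_mul, conjTranspose_apply, RCLike.star_def, ← Complex.mul_conj]
  ring

namespace IsHermitian

variable {A Z : Matrix n n ℂ}

noncomputable def eigenCoords (hA : A.IsHermitian) (hZ : Z.IsHermitian) (X : Matrix n n ℂ) :
    Matrix n n ℂ :=
  (hA.eigenvectorUnitary : Matrix n n ℂ)ᴴ * X * (hZ.eigenvectorUnitary : Matrix n n ℂ)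

lemma re_trace_cfc_mul_cfc (hA : A.IsHermitian) (hZ : Z.IsHermitian) (f g : ℝ → ℝ)
    (C : Matrix n n ℂ) :
    (Cᴴ * cfc f A * C * cfc g Z).trace.re = ∑ i, ∑ j,
      f (hA.eigenvalues i) * g (hZ.eigenvalues j) * normSq (hA.eigenCoords hZ C i j) := by
  set U : Matrix n n ℂ := ↑hA.eigenvectorUnitary
  set V : Matrix n n ℂ := ↑hZ.eigenvectorUnitary
  set D : Matrix n n ℂ := diagonal (RCLike.ofReal ∘ f ∘ hA.eigenvalues)
  set E : Matrix n n ℂ := diagonal (RCLike.ofReal ∘ g ∘ hZ.eigenvalues)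
  have hcycle : (Cᴴ * (U * D * star U) * C * (V * E * star V)).trace =
      (D * hA.eigenCoords hZ C * E * (hA.eigenCoords hZ C)ᴴ).trace := calc
    _ = (Cᴴ * U * (D * (Uᴴ * (C * (V * (E * Vᴴ)))))).trace := by
      simp only [star_eq_conjTranspose, Matrix.mul_assoc]
    _ = _ := by
      rw [trace_mul_comm]
      simp only [eigenCoords, conjTranspose_mul, conjTranspose_conjTranspose, Matrix.mul_assoc,
        U, V]
  rw [hA.cfc_eq, hZ.cfc_eq, IsHermitian.cfc, IsHermitian.cfc, Unitary.conjStarAlgAut_apply,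
    Unitary.conjStarAlgAut_apply, hcycle, trace_diagonal_mul_mul_diagonal_mul_conjTranspose]
  simp

lemma re_trace_conjTranspose_mul_mul (hA : A.IsHermitian) (hZ : Z.IsHermitian)
    (X : Matrix n n ℂ) :
    (Xᴴ * A * X).trace.re =
      ∑ i, ∑ j, hA.eigenvalues i * normSq (hA.eigenCoords hZ X i j) := by
  have h := re_trace_cfc_mul_cfc hA hZ (fun x ↦ x) (fun _ ↦ 1) X
  rw [cfc_id' ℝ A hA.isSelfAdjoint, cfc_const_one ℝ Z, Matrix.mul_one] at h
  simpa using h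

lemma re_trace_conjTranspose_mul_self_mul (hA : A.IsHermitian) (hZ : Z.IsHermitian)
    (Y : Matrix n n ℂ) :
    (Yᴴ * Y * Z).trace.re =
      ∑ i, ∑ j, hZ.eigenvalues j * normSq (hA.eigenCoords hZ Y i j) := by
  have h := re_trace_cfc_mul_cfc hA hZ (fun _ ↦ 1) (fun x ↦ x) Y
  rw [cfc_id' ℝ Z hZ.isSelfAdjoint, cfc_const_one ℝ A, Matrix.mul_one] at h
  simpa using h

lemma eigenCoords_sub (hA : A.IsHermitian) (hZ : Z.IsHermitian) (X Y : Matrix n n ℂ) :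
    hA.eigenCoords hZ (X - Y) = hA.eigenCoords hZ X - hA.eigenCoords hZ Y := by
  simp only [eigenCoords, Matrix.mul_sub, Matrix.sub_mul]

lemma eigenCoords_conj (hA : A.IsHermitian) (hZ : Z.IsHermitian) (G : Matrix n n ℂ) :
    hA.eigenCoords hZ ((hA.eigenvectorUnitary : Matrix n n ℂ) * G *
      (hZ.eigenvectorUnitary : Matrix n n ℂ)ᴴ) = G := by
  simp only [eigenCoords, ← star_eq_conjTranspose, Matrix.mul_assoc,
    Unitary.star_mul_self_of_mem (SetLike.coe_mem _), Matrix.mul_one]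
  rw [← Matrix.mul_assoc, Unitary.star_mul_self_of_mem (SetLike.coe_mem _), Matrix.one_mul]

end IsHermitian

namespace PosSemidef

variable {A Z : Matrix n n ℂ}

noncomputable def parallelSumForm (hA : A.PosSemidef) (hZ : Z.PosSemidef) (C : Matrix n n ℂ)
    (l : ℝ) : ℝ :=
  ∑ i, ∑ j, Real.parallelSum (hA.1.eigenvalues i) (l * hZ.1.eigenvalues j) *
    normSq (hA.1.eigenCoords hZ.1 C i j)

lemma parallelSumForm_le (hA : A.PosSemidef) (hZ : Z.PosSemidef) (C Y : Matrix n n ℂ) {l : ℝ}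
    (hl : 0 ≤ l) :
    hA.parallelSumForm hZ C l ≤
      ((C - Y)ᴴ * A * (C - Y)).trace.re + l * (Yᴴ * Y * Z).trace.re := by
  rw [hA.1.re_trace_conjTranspose_mul_mul hZ.1, hA.1.re_trace_conjTranspose_mul_self_mul hZ.1,
    Finset.mul_sum, ← Finset.sum_add_distrib, parallelSumForm]
  refine Finset.sum_le_sum fun i _ ↦ ?_
  rw [Finset.mul_sum, ← Finset.sum_add_distrib]
  refine Finset.sum_le_sum fun j _ ↦ ?_
  rw [IsHermitian.eigenCoords_sub, sub_apply, ← mul_assoc]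
  exact Real.parallelSum_mul_normSq_le (hA.eigenvalues_nonneg i)
    (mul_nonneg hl (hZ.eigenvalues_nonneg j)) _ _

lemma exists_parallelSumForm_eq (hA : A.PosSemidef) (hZ : Z.PosSemidef) (C : Matrix n n ℂ)
    {l : ℝ} (hl : 0 ≤ l) :
    ∃ Y : Matrix n n ℂ,
      ((C - Y)ᴴ * A * (C - Y)).trace.re + l * (Yᴴ * Y * Z).trace.re =
        hA.parallelSumForm hZ C l := by
  set a := hA.1.eigenvalues
  set z := hZ.1.eigenvalues
  set G := hA.1.eigenCoords hZ.1 C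
  set R : Matrix n n ℂ := of fun i j ↦ ((a i / (a i + l * z j) : ℝ) : ℂ) * G i j
  refine ⟨(hA.1.eigenvectorUnitary : Matrix n n ℂ) * R *
    (hZ.1.eigenvectorUnitary : Matrix n n ℂ)ᴴ, ?_⟩
  rw [hA.1.re_trace_conjTranspose_mul_mul hZ.1, hA.1.re_trace_conjTranspose_mul_self_mul hZ.1,
    IsHermitian.eigenCoords_sub, IsHermitian.eigenCoords_conj, Finset.mul_sum,
    ← Finset.sum_add_distrib, parallelSumForm]
  refine Finset.sum_congr rfl fun i _ ↦ ?_
  rw [Finset.mul_sum, ← Finset.sum_add_distrib]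
  refine Finset.sum_congr rfl fun j _ ↦ ?_
  rw [sub_apply, ← mul_assoc]
  exact Real.parallelSum_mul_normSq_eq (hA.eigenvalues_nonneg i)
    (mul_nonneg hl (hZ.eigenvalues_nonneg j)) _

lemma parallelSumForm_concave {A₁ A₂ Z₁ Z₂ : Matrix n n ℂ} {t : ℝ} (ht₀ : 0 ≤ t)
    (ht₁ : t ≤ 1) (hA₁ : A₁.PosSemidef) (hA₂ : A₂.PosSemidef) (hZ₁ : Z₁.PosSemidef)
    (hZ₂ : Z₂.PosSemidef) (hA : (t • A₁ + (1 - t) • A₂).PosSemidef)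
    (hZ : (t • Z₁ + (1 - t) • Z₂).PosSemidef) (C : Matrix n n ℂ) {l : ℝ} (hl : 0 ≤ l) :
    t * hA₁.parallelSumForm hZ₁ C l + (1 - t) * hA₂.parallelSumForm hZ₂ C l ≤
      hA.parallelSumForm hZ C l := by
  obtain ⟨Y, hY⟩ := hA.exists_parallelSumForm_eq hZ C hl
  have h₁ := mul_le_mul_of_nonneg_left (hA₁.parallelSumForm_le hZ₁ C Y hl) ht₀
  have h₂ := mul_le_mul_of_nonneg_left (hA₂.parallelSumForm_le hZ₂ C Y hl) (sub_nonneg.2 ht₁)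
  simp only [← hY, Matrix.mul_add, Matrix.add_mul, Matrix.mul_smul, Matrix.smul_mul,
    re_trace_smul_add_smul]
  linarith

lemma re_trace_rpow_eq_integral {s : ℝ} {μ : Measure ℝ}
    (hμ : ∀ a z : ℝ, 0 ≤ a → 0 ≤ z →
      IntegrableOn (fun l ↦ l ^ (s - 2) * Real.parallelSum a (l * z)) (Ioi 0) μ ∧
      a ^ s * z ^ (1 - s) = ∫ l in Ioi 0, l ^ (s - 2) * Real.parallelSum a (l * z) ∂μ)
    (hA : A.PosSemidef) (hZ : Z.PosSemidef) (C : Matrix n n ℂ) :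
    IntegrableOn (fun l ↦ l ^ (s - 2) * hA.parallelSumForm hZ C l) (Ioi 0) μ ∧
      (Cᴴ * cfc (fun x : ℝ ↦ x ^ s) A * C * cfc (fun x : ℝ ↦ x ^ (1 - s)) Z).trace.re =
        ∫ l in Ioi 0, l ^ (s - 2) * hA.parallelSumForm hZ C l ∂μ := by
  set a := hA.1.eigenvalues
  set z := hZ.1.eigenvalues
  set w := fun i j ↦ normSq (hA.1.eigenCoords hZ.1 C i j)
  have hsum : (fun l ↦ l ^ (s - 2) * hA.parallelSumForm hZ C l) =
      fun l ↦ ∑ i, ∑ j, l ^ (s - 2) * Real.parallelSum (a i) (l * z j) * w i j := by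
    simp only [parallelSumForm, Finset.mul_sum, mul_assoc, a, z, w]
  have hint (i j : n) := ((hμ (a i) (z j) (hA.eigenvalues_nonneg i)
    (hZ.eigenvalues_nonneg j)).1.mul_const (w i j))
  have hint_i (i : n) := integrable_finsetSum Finset.univ fun j _ ↦ hint i j
  refine ⟨hsum ▸ integrable_finsetSum Finset.univ fun i _ ↦ hint_i i, ?_⟩
  rw [hA.1.re_trace_cfc_mul_cfc hZ.1, hsum, integral_finsetSum _ fun i _ ↦ hint_i i]
  refine Finset.sum_congr rfl fun i _ ↦ ?_
  rw [integral_finsetSum _ fun j _ ↦ hint i j]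
  refine Finset.sum_congr rfl fun j _ ↦ ?_
  rw [integral_mul_const, ← (hμ (a i) (z j) (hA.eigenvalues_nonneg i)
    (hZ.eigenvalues_nonneg j)).2]

end PosSemidef

theorem lieb_concave {s t : ℝ} (hs : s ∈ Ioc 0 1) (ht₀ : 0 ≤ t) (ht₁ : t ≤ 1)
    {A₁ A₂ Z₁ Z₂ : Matrix n n ℂ} (hA₁ : A₁.PosSemidef) (hA₂ : A₂.PosSemidef)
    (hZ₁ : Z₁.PosSemidef) (hZ₂ : Z₂.PosSemidef) (C : Matrix n n ℂ) :
    t * (Cᴴ * cfc (fun x : ℝ ↦ x ^ s) A₁ * C * cfc (fun x : ℝ ↦ x ^ (1 - s)) Z₁).trace.re +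
        (1 - t) *
          (Cᴴ * cfc (fun x : ℝ ↦ x ^ s) A₂ * C * cfc (fun x : ℝ ↦ x ^ (1 - s)) Z₂).trace.re ≤
      (Cᴴ * cfc (fun x : ℝ ↦ x ^ s) (t • A₁ + (1 - t) • A₂) * C *
        cfc (fun x : ℝ ↦ x ^ (1 - s)) (t • Z₁ + (1 - t) • Z₂)).trace.re := by
  have hA := (hA₁.smul ht₀).add (hA₂.smul (sub_nonneg.2 ht₁))
  have hZ := (hZ₁.smul ht₀).add (hZ₂.smul (sub_nonneg.2 ht₁))
  obtain rfl | hs₁ := hs.2.eq_or_lt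
  · simp only [Real.rpow_one, sub_self, Real.rpow_zero, cfc_id' ℝ _ hA₁.1.isSelfAdjoint,
      cfc_id' ℝ _ hA₂.1.isSelfAdjoint, cfc_id' ℝ _ hA.1.isSelfAdjoint,
      cfc_const_one ℝ _ hZ₁.1.isSelfAdjoint, cfc_const_one ℝ _ hZ₂.1.isSelfAdjoint,
      cfc_const_one ℝ _ hZ.1.isSelfAdjoint, Matrix.mul_one, Matrix.mul_add, Matrix.add_mul,
      Matrix.mul_smul, Matrix.smul_mul, re_trace_smul_add_smul, le_refl]
  obtain ⟨μ, hμ⟩ := Real.exists_measure_rpow_mul_rpow_eq_integral ⟨hs.1, hs₁⟩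
  obtain ⟨hi₁, h₁⟩ := hA₁.re_trace_rpow_eq_integral hμ hZ₁ C
  obtain ⟨hi₂, h₂⟩ := hA₂.re_trace_rpow_eq_integral hμ hZ₂ C
  obtain ⟨hi, h⟩ := hA.re_trace_rpow_eq_integral hμ hZ C
  rw [h₁, h₂, h, ← integral_const_mul, ← integral_const_mul,
    ← integral_add (hi₁.const_mul t) (hi₂.const_mul _)]
  refine setIntegral_mono_on ((hi₁.const_mul t).add (hi₂.const_mul _)) hi measurableSet_Ioi
    fun l hl ↦ ?_
  have hconc :=
    PosSemidef.parallelSumForm_concave ht₀ ht₁ hA₁ hA₂ hZ₁ hZ₂ hA hZ C (le_of_lt hl)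
  calc t * (l ^ (s - 2) * hA₁.parallelSumForm hZ₁ C l) +
        (1 - t) * (l ^ (s - 2) * hA₂.parallelSumForm hZ₂ C l) =
      l ^ (s - 2) * (t * hA₁.parallelSumForm hZ₁ C l +
        (1 - t) * hA₂.parallelSumForm hZ₂ C l) := by ring
    _ ≤ l ^ (s - 2) * hA.parallelSumForm hZ C l :=
      mul_le_mul_of_nonneg_left hconc (Real.rpow_nonneg (le_of_lt hl) _)

namespace PosSemidef

variable {A Z : Matrix n n ℂ}

open scoped MatrixOrder in
lemma nonneg_of_mem_spectrum (hA : A.PosSemidef) {x : ℝ} (hx : x ∈ spectrum ℝ A) : 0 ≤ x :=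
  spectrum_nonneg_of_nonneg (nonneg_iff_posSemidef.2 hA) hx

open scoped MatrixOrder in
lemma cfc_rpow (hA : A.PosSemidef) (r : ℝ) : (cfc (fun x : ℝ ↦ x ^ r) A).PosSemidef :=
  nonneg_iff_posSemidef.1 <| cfc_nonneg fun _ hx ↦
    Real.rpow_nonneg (hA.nonneg_of_mem_spectrum hx) r

lemma mul_cfc_rpow_cfc_rpow (hA : A.PosSemidef) {p : ℝ} (hp : 1 ≤ p) :
    A * cfc (fun x : ℝ ↦ x ^ (1 - 1 / p)) (cfc (fun x : ℝ ↦ x ^ p) A) =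
      cfc (fun x : ℝ ↦ x ^ p) A := by
  have hfin := (spectrum ℝ A).toFinite
  nth_rw 1 [← cfc_id' ℝ A hA.1.isSelfAdjoint]
  rw [← cfc_comp' _ _ A ((hfin.image _).continuousOn _) (hfin.continuousOn _) hA.1.isSelfAdjoint,
    ← cfc_mul _ _ A (hfin.continuousOn _) (hfin.continuousOn _)]
  refine cfc_congr fun x hx ↦ ?_
  have hx₀ := hA.nonneg_of_mem_spectrum hx
  have hp₀ : p ≠ 0 := by linarith
  rw [← Real.rpow_mul hx₀, mul_one_sub, mul_one_div_cancel hp₀,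
    ← Real.rpow_one_add' hx₀ (by simpa), add_sub_cancel]

lemma mul_re_trace_mul_cfc_rpow_le (hA : A.PosSemidef) (hZ : Z.PosSemidef) {p : ℝ}
    (hp : 1 ≤ p) :
    p * (A * cfc (fun x : ℝ ↦ x ^ (1 - 1 / p)) Z).trace.re ≤
      (cfc (fun x : ℝ ↦ x ^ p) A).trace.re + (p - 1) * Z.trace.re := by
  have h₁ := hA.1.re_trace_cfc_mul_cfc hZ.1 (fun x ↦ x) (fun x ↦ x ^ (1 - 1 / p)) 1
  have h₂ := hA.1.re_trace_cfc_mul_cfc hZ.1 (fun x ↦ x ^ p) (fun _ ↦ 1) 1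
  have h₃ := hA.1.re_trace_cfc_mul_cfc hZ.1 (fun _ ↦ 1) (fun x ↦ x) 1
  rw [cfc_id' ℝ A hA.1.isSelfAdjoint] at h₁
  rw [cfc_const_one ℝ Z hZ.1.isSelfAdjoint] at h₂
  rw [cfc_const_one ℝ A hA.1.isSelfAdjoint, cfc_id' ℝ Z hZ.1.isSelfAdjoint] at h₃
  simp only [conjTranspose_one, Matrix.one_mul, Matrix.mul_one] at h₁ h₂ h₃
  rw [h₁, h₂, h₃, Finset.mul_sum, Finset.mul_sum, ← Finset.sum_add_distrib]
  gcongr with i _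
  rw [Finset.mul_sum, Finset.mul_sum, ← Finset.sum_add_distrib]
  gcongr with j _
  have hyoung := Real.mul_mul_rpow_one_sub_one_div_le hp (hA.eigenvalues_nonneg i)
    (hZ.eigenvalues_nonneg j)
  have := mul_le_mul_of_nonneg_right hyoung (normSq_nonneg (hA.1.eigenCoords hZ.1 1 i j))
  linarith

end PosSemidef

theorem epstein_concave {p t : ℝ} (hp : 1 ≤ p) (ht₀ : 0 ≤ t) (ht₁ : t ≤ 1)
    {A₁ A₂ : Matrix n n ℂ} (hA₁ : A₁.PosSemidef) (hA₂ : A₂.PosSemidef) (C : Matrix n n ℂ) :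
    t * (cfc (fun x : ℝ ↦ x ^ p) (Cᴴ * cfc (fun x : ℝ ↦ x ^ (1 / p)) A₁ * C)).trace.re +
        (1 - t) *
          (cfc (fun x : ℝ ↦ x ^ p) (Cᴴ * cfc (fun x : ℝ ↦ x ^ (1 / p)) A₂ * C)).trace.re ≤
      (cfc (fun x : ℝ ↦ x ^ p)
        (Cᴴ * cfc (fun x : ℝ ↦ x ^ (1 / p)) (t • A₁ + (1 - t) • A₂) * C)).trace.re := by
  have hp₀ : 0 < p := by linarith
  have hM {A : Matrix n n ℂ} (hA : A.PosSemidef) :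
      (Cᴴ * cfc (fun x : ℝ ↦ x ^ (1 / p)) A * C).PosSemidef :=
    (hA.cfc_rpow _).conjTranspose_mul_mul_same C
  have hZ₁ := (hM hA₁).cfc_rpow p
  have hZ₂ := (hM hA₂).cfc_rpow p
  have hA := (hA₁.smul ht₀).add (hA₂.smul (sub_nonneg.2 ht₁))
  have hZ := (hZ₁.smul ht₀).add (hZ₂.smul (sub_nonneg.2 ht₁))
  have hlieb := lieb_concave ⟨one_div_pos.2 hp₀, (div_le_one hp₀).2 hp⟩ ht₀ ht₁ hA₁ hA₂ hZ₁ hZ₂ C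
  -- `Zₖ = Mₖ^p` attains the variational formula, so Lieb bounds `t Tr Z₁ + (1 - t) Tr Z₂`.
  rw [(hM hA₁).mul_cfc_rpow_cfc_rpow hp, (hM hA₂).mul_cfc_rpow_cfc_rpow hp] at hlieb
  have hyoung := (hM hA).mul_re_trace_mul_cfc_rpow_le hZ hp
  rw [re_trace_smul_add_smul] at hyoung
  linarith [mul_le_mul_of_nonneg_left hlieb hp₀.le]

end Matrix

/-- Epstein's concavity theorem (special case): for a fixed positive semidefinite
K×K matrix `B` and real `p ≥ 1`, the map `A ↦ Tr (B A^{1/p} B)^p` is concave on the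
cone of positive semidefinite matrices. -/
theorem epstein_concavity (K : ℕ) (B : Matrix (Fin K) (Fin K) ℂ)
    (hB : B.PosSemidef) (p : ℝ) (hp : 1 ≤ p)
    (A₁ A₂ : Matrix (Fin K) (Fin K) ℂ) (hA₁ : A₁.PosSemidef) (hA₂ : A₂.PosSemidef)
    (t : ℝ) (ht₀ : 0 ≤ t) (ht₁ : t ≤ 1) :
    t * ((cfc (fun x : ℝ => x ^ p)
            (B * cfc (fun x : ℝ => x ^ (1 / p)) A₁ * B)).trace).re
      + (1 - t) * ((cfc (fun x : ℝ => x ^ p)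
            (B * cfc (fun x : ℝ => x ^ (1 / p)) A₂ * B)).trace).re
      ≤ ((cfc (fun x : ℝ => x ^ p)
            (B * cfc (fun x : ℝ => x ^ (1 / p)) (t • A₁ + (1 - t) • A₂) * B)).trace).re := by
  simpa only [hB.1.eq] using epstein_concave hp ht₀ ht₁ hA₁ hA₂ B
end
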